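/- arXiv:2005.14397 — 3 statements merged into one kernel-verified Lean document; each statement's English description precedes it below -/
import Mathlib

section
/- Let ξ₁, ξ₂, … be any sequence of distinct real numbers, let T = Q(ξ₁,ξ₂,…) be the corresponding RSK recording tableau, and let m ∈ ℕ. Then for each integer t ≥ m, the bumping route of T in lazy parametrization coincides with the trajectory of the symbol ∞: Box^{lazy}_{T,m}(t) = Pos_∞( P(ξ₁,…,ξ_m, ∞, ξ_{m+1}, …, ξ_t) ), where the right-hand side is the position of the box containing ∞ in the insertion tableau of the sequence ξ₁,…,ξ_m with ∞ inserted at position m+1 followed by ξ_{m+1},…,ξ_t. -/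
open MeasureTheory ProbabilityTheory Filter Topology

noncomputable section

namespace PoissonBump

/-- The row with index `y` of a tableau. -/
def rowOf {α : Type*} (tab : List (List α)) (y : ℕ) : List α := tab.getD y ([] : List α)

/-- Schensted insertion of `a` into a single row: returns the new row and the bumped entry
(`none` if `a` was appended at the end of the row). -/
def rowIns {α : Type*} [LinearOrder α] (r : List α) (a : α) : List α × Option α :=
  match r.findIdx? (fun b => decide (a < b)) with
  | none => (r ++ [a], none)
  | some i => (r.set i a, r[i]?)

/-- Schensted row insertion of `a` into a tableau, given as the list of its rows
(row `0` is the bottom row). -/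
def insertTab {α : Type*} [LinearOrder α] : List (List α) → α → List (List α)
  | [], a => [[a]]
  | r :: rest, a =>
    match rowIns r a with
    | (r', none) => r' :: rest
    | (r', some b) => r' :: insertTab rest b

/-- The RSK insertion tableau `P(w)` of a finite sequence `w`. -/
def insTab {α : Type*} [LinearOrder α] (w : List α) : List (List α) :=
  w.foldl insertTab ([] : List (List α))

/-- The first `n` entries of an infinite sequence. -/
def pref {α : Type*} (w : ℕ → α) (n : ℕ) : List α := (List.range n).map w

/-- The set of boxes `(x, y)` (column, row) of a tableau. -/
def cellsOf {α : Type*} (tab : List (List α)) : Finset (ℕ × ℕ) :=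
  (Finset.range tab.length).biUnion fun y =>
    (Finset.range ((rowOf tab y).length)).image fun x => (x, y)

/-- The entry in column `x`, row `y` of the recording tableau `Q(w)` of an infinite
sequence `w`, i.e. the number of the Schensted insertion step at which the box `(x, y)`
stopped being empty (`⊤` if it stays empty forever). -/
def recTab (w : ℕ → ℝ) (x y : ℕ) : ℕ∞ :=
  sInf {n : ℕ∞ | ∃ k : ℕ, n = (k : ℕ∞) ∧ (x, y) ∈ cellsOf (insTab (pref w k))}

/-- Auxiliary description of the bumping route of the insertion `T ← m + 1/2` into an
infinite tableau `T` (with entries in `ℕ∞`, the value `⊤` marking an empty box):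
`(routeAux T m y).1` is the column of the box of the bumping route in row `y`, and
`(routeAux T m y).2` is the entry of `T` in that box (the value bumped to row `y+1`;
it is `⊤` if that box is empty, in which case the route terminates there). -/
def routeAux (T : ℕ → ℕ → ℕ∞) (m : ℕ) : ℕ → ℕ × ℕ∞
  | 0 =>
    (sInf {x : ℕ | (m : ℕ∞) < T x 0}, T (sInf {x : ℕ | (m : ℕ∞) < T x 0}) 0)
  | y + 1 =>
    (sInf {x : ℕ | (routeAux T m y).2 < T x (y + 1)},
      T (sInf {x : ℕ | (routeAux T m y).2 < T x (y + 1)}) (y + 1))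

/-- The bumping route `T ⤳ m + 1/2` reaches row `y`. -/
def routeDef (T : ℕ → ℕ → ℕ∞) (m y : ℕ) : Prop :=
  ∀ y' < y, (routeAux T m y').2 ≠ ⊤

/-- `Y_x^{[m]}`: the index of the first row in which the bumping route `T ⤳ m + 1/2`
reaches the column with index `x` (or a column to its left); `⊤` if no such row exists. -/
def Yrow (T : ℕ → ℕ → ℕ∞) (m x : ℕ) : ℕ∞ :=
  sInf {n : ℕ∞ | ∃ y : ℕ, n = (y : ℕ∞) ∧ routeDef T m y ∧ (routeAux T m y).1 ≤ x}

/-- The row of the first box of the bumping route `T ⤳ m + 1/2` whose entry in `T`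
exceeds `t` (an empty box, with entry `⊤`, counts). -/
def lazyRow (T : ℕ → ℕ → ℕ∞) (m t : ℕ) : ℕ :=
  sInf {y : ℕ | (t : ℕ∞) < (routeAux T m y).2}

/-- `Box^{lazy}_{T,m}(t)`, the lazy parametrization of the bumping route: the first box
`(x, y)` of the bumping route `T ⤳ m + 1/2` whose entry in `T` is larger than `t`
(or the final box of the route if all entries of `T` on the route are `≤ t`). -/
def lazyBox (T : ℕ → ℕ → ℕ∞) (m t : ℕ) : ℕ × ℕ :=
  ((routeAux T m (lazyRow T m t)).1, lazyRow T m t)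

/-- `T_x^{[m]}`: the time at which the bumping route `T ⤳ m + 1/2` in the lazy
parametrization reaches the column with index `x` (or a column to its left). -/
def Tlazy (T : ℕ → ℕ → ℕ∞) (m x : ℕ) : ℕ∞ :=
  sInf {n : ℕ∞ | ∃ t : ℕ, n = (t : ℕ∞) ∧ m ≤ t ∧ (lazyBox T m t).1 ≤ x}

/-- The sequence `ξ₁, …, ξ_m, ∞, ξ_{m+1}, …, ξ_t` (as a list over `WithTop ℝ`). -/
def wtSeq (w : ℕ → ℝ) (m t : ℕ) : List (WithTop ℝ) :=
  ((List.range m).map fun i => (w i : WithTop ℝ)) ++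
    (⊤ : WithTop ℝ) :: ((List.range (t - m)).map fun j => (w (m + j) : WithTop ℝ))

/-- The position `(x, y)` (column, row) of the box containing `∞ = ⊤` in a tableau. -/
def posTop (tab : List (List (WithTop ℝ))) : ℕ × ℕ :=
  ((sInf {x : ℕ | (rowOf tab (sInf {y : ℕ | (⊤ : WithTop ℝ) ∈ rowOf tab y})).getD x 0 = ⊤}),
    sInf {y : ℕ | (⊤ : WithTop ℝ) ∈ rowOf tab y})

/-- The augmented shape `sh* T` of a tableau containing the entry `∞ = ⊤`: the pair
consisting of the shape of `T` with the `∞`-box removed, and the position of the `∞`-box. -/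
def shStar (tab : List (List (WithTop ℝ))) : Finset (ℕ × ℕ) × ℕ × ℕ :=
  ((cellsOf tab).filter (fun c => (rowOf tab c.2).getD c.1 0 ≠ ⊤), posTop tab)

/-- The augmented Plancherel growth process: `augP w m t = sh* P(w₁,…,w_m,∞,w_{m+1},…,w_t)`. -/
def augP (w : ℕ → ℝ) (m t : ℕ) : Finset (ℕ × ℕ) × ℕ × ℕ :=
  shStar (insTab (wtSeq w m t))

/-- The Plancherel growth process: the shape of the RSK insertion tableau of `w₁, …, w_t`. -/
def shP (w : ℕ → ℝ) (t : ℕ) : Finset (ℕ × ℕ) := cellsOf (insTab (pref w t))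

/-- The common shape of the RSK insertion and recording tableaux of a permutation. -/
def shapeOfPerm {n : ℕ} (π : Equiv.Perm (Fin n)) : Finset (ℕ × ℕ) :=
  cellsOf (insTab (List.ofFn fun i => ((π i : ℕ) : ℝ)))

open scoped Classical in
/-- The Plancherel measure of the Young diagram `s`: the probability that the RSK shape of
a uniformly random permutation of `{1, …, n}` equals `s`. -/
def plancherelProb (n : ℕ) (s : Finset (ℕ × ℕ)) : ℝ :=
  ((Finset.univ.filter fun π : Equiv.Perm (Fin n) => shapeOfPerm π = s).card : ℝ) / n.factorial

/-- The exponential distribution `Exp(1)` on `ℝ`. -/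
def expMeasure : Measure ℝ :=
  volume.withDensity fun u => ENNReal.ofReal (if 0 ≤ u then Real.exp (-u) else 0)

/-- The Erlang distribution `Erlang(l+1, 1)`, with density `u^l e^{-u} / l!` on `ℝ₊`. -/
def erlangMeasure (l : ℕ) : Measure ℝ :=
  volume.withDensity fun u =>
    ENNReal.ofReal (if 0 ≤ u then u ^ l * Real.exp (-u) / l.factorial else 0)

/-- The distribution on `[1, ∞)` with tail `P(R > u) = u^{-(i+1)}` for `u ≥ 1`,
given by its density `(i+1) u^{-(i+2)}`. -/
def ratioMeasure (i : ℕ) : Measure ℝ :=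
  volume.withDensity fun u =>
    ENNReal.ofReal (if 1 ≤ u then ((i : ℝ) + 1) * u ^ (-((i : ℤ) + 2)) else 0)

/-- The Poisson probability mass function with parameter `r`. -/
def poisPMF (r : ℝ) (n : ℕ) : ℝ := Real.exp (-r) * r ^ n / n.factorial

/-- The binomial probability mass function `Binom(k, p)`. -/
def binomPMF (k : ℕ) (p : ℝ) (n : ℕ) : ℝ :=
  if n ≤ k then (k.choose n : ℝ) * p ^ n * (1 - p) ^ (k - n) else 0

/-- The counting process of the point process of partial sums of `ψ₀, ψ₁, …`:
`countN ψ z ω = #{k : ψ₀(ω) + ⋯ + ψ_k(ω) ≤ z}`. -/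
def countN {Ω' : Type*} (ψ : ℕ → Ω' → ℝ) (z : ℝ) (ω : Ω') : ℕ :=
  sInf {n : ℕ | z < ∑ j ∈ Finset.range (n + 1), ψ j ω}

/-- `(s, c)` is an augmented Young diagram: `s` is a Young diagram (a finite lower set)
and `c` is one of its outer corners. -/
def IsAug (s : Finset (ℕ × ℕ)) (c : ℕ × ℕ) : Prop :=
  IsLowerSet (s : Set (ℕ × ℕ)) ∧ c ∉ s ∧ IsLowerSet (insert c (s : Set (ℕ × ℕ)))

open scoped Classical in
/-- The edge relation of the augmented Young graph, on pairs
(cells of the regular part, special box): `b` is obtained from `a` by adding one box to the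
regular part, and the special box of `b` is the outer corner in the row directly above the
special box of `a` if the new box is the special box of `a`, and the special box of `a`
otherwise. -/
def AugEdgeData (a b : Finset (ℕ × ℕ) × ℕ × ℕ) : Prop :=
  IsAug a.1 a.2 ∧ IsAug b.1 b.2 ∧ a.1 ⊆ b.1 ∧ b.1.card = a.1.card + 1 ∧
    (if b.1 = insert a.2 a.1 then b.2.2 = a.2.2 + 1 else b.2 = a.2)

/-- A tableau (a list of rows, bottom row first): nonempty rows of weakly decreasing
lengths, entries strictly increasing along rows and up the columns. -/
def IsTab (tab : List (List (WithTop ℝ))) : Prop :=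
  (∀ r ∈ tab, r ≠ []) ∧
  (∀ r ∈ tab, List.Chain' (· < ·) r) ∧
  List.Chain' (fun r s : List (WithTop ℝ) => s.length ≤ r.length) tab ∧
  (∀ (y x : ℕ) (a b : WithTop ℝ), (rowOf tab y)[x]? = some a →
     (rowOf tab (y + 1))[x]? = some b → a < b)

/-- Stirling numbers of the second kind. -/
def stirling2 : ℕ → ℕ → ℕ
  | 0, 0 => 1
  | 0, _ + 1 => 0
  | _ + 1, 0 => 0
  | n + 1, j + 1 => (j + 1) * stirling2 n (j + 1) + stirling2 n j

/-- The signed combination of Poisson distributions `ν_{k,p,h}` (as a function on `ℕ`). -/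
def nuPMF (k : ℕ) (p h : ℝ) (n : ℕ) : ℝ :=
  ((Real.exp h - 1) ^ k)⁻¹ *
    ∑ j ∈ Finset.range (k + 1),
      (-1 : ℝ) ^ (k - j) * (k.choose j : ℝ) * Real.exp (j * h) * poisPMF (p * j * h) n

/-- The number of boxes in the row with index `i` of the diagram `s`. -/
def rowLen (s : Finset (ℕ × ℕ)) (i : ℕ) : ℕ := (s.filter fun c => c.2 = i).card

/-- The edge relation of the augmented Young graph on `ℕ₀ × 𝕐`, where an augmented Young
diagram `(λ, □)` is identified with `(x_□, λ)` for `x_□` the column of the special box. -/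
def edgeNY (a b : ℕ × Finset (ℕ × ℕ)) : Prop :=
  a.2 ⊆ b.2 ∧ b.2.card = a.2.card + 1 ∧
    ((∃ r, (a.1, r) ∈ b.2 \ a.2) →
      b.1 = sSup {v : ℕ | (∃ i, rowLen b.2 i = v) ∧ v ≤ a.1}) ∧
    ((¬ ∃ r, (a.1, r) ∈ b.2 \ a.2) → b.1 = a.1)

/-!
An entry of `Q = Q(ξ₁, ξ₂, …)` exceeds `s` exactly when its box lies outside
`P(ξ₁, …, ξ_s)`. Hence the route `Q ⤳ m + 1/2` enters each row at the first box outside the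
current insertion tableau, and at time `t` the lazy box is the first box to the right of some
row `y` of `P(ξ₁, …, ξ_t)`; it moves up to row `y + 1` exactly when step `t + 1` fills it.

On the other side, a finite entry inserted into a tableau whose row `y` ends in `∞` follows the
same bumping route as without the `∞`, and the `∞` is pushed to the end of row `y + 1` exactly
when that route creates a box at the end of row `y`. So `P(ξ₁, …, ξ_m, ∞, ξ_{m+1}, …, ξ_t)` is
`P(ξ₁, …, ξ_t)` with `∞` appended to the row of the lazy box, by induction on `t`.
-/

section Tableau

variable {α : Type*}

@[simp]
lemma rowOf_nil (y : ℕ) : rowOf ([] : List (List α)) y = [] := by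
  cases y <;> rfl

@[simp]
lemma rowOf_cons_zero (r : List α) (rest : List (List α)) : rowOf (r :: rest) 0 = r := rfl

@[simp]
lemma rowOf_cons_succ (r : List α) (rest : List (List α)) (y : ℕ) :
    rowOf (r :: rest) (y + 1) = rowOf rest y := rfl

lemma rowOf_map_map {β : Type*} (f : α → β) (tab : List (List α)) (y : ℕ) :
    rowOf (tab.map (List.map f)) y = (rowOf tab y).map f := by
  induction tab generalizing y with
  | nil => simp
  | cons r rest ih => cases y <;> simp [ih]

lemma lt_length_of_lt_length_rowOf {tab : List (List α)} {x y : ℕ}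
    (h : x < (rowOf tab y).length) : y < tab.length := by
  by_contra! hy
  simp [rowOf, List.getElem?_eq_none hy] at h

lemma mem_cellsOf {tab : List (List α)} {x y : ℕ} :
    (x, y) ∈ cellsOf tab ↔ x < (rowOf tab y).length := by
  simp only [cellsOf, Finset.mem_biUnion, Finset.mem_range, Finset.mem_image, Prod.mk.injEq]
  constructor
  · rintro ⟨y, -, x, hx, rfl, rfl⟩
    exact hx
  · exact fun h => ⟨y, lt_length_of_lt_length_rowOf h, x, h, rfl, rfl⟩

end Tableau

section Insertion

variable {α : Type*} [LinearOrder α] {r r' : List α} {a b : α}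

lemma findIdx?_eq_none_of_rowIns_eq_none (h : rowIns r a = (r', none)) :
    r.findIdx? (a < ·) = none := by
  unfold rowIns at h
  split at h
  · assumption
  · rename_i i hfind
    obtain ⟨hi, -, -⟩ := List.findIdx?_eq_some_iff_getElem.mp hfind
    simp [List.getElem?_eq_getElem hi] at h

lemma eq_append_of_rowIns_eq_none (h : rowIns r a = (r', none)) : r' = r ++ [a] := by
  simpa [rowIns, findIdx?_eq_none_of_rowIns_eq_none h] using h.symm

lemma exists_of_rowIns_eq_some (h : rowIns r a = (r', some b)) :
    ∃ i, ∃ hi : i < r.length, r' = r.set i a ∧ b = r[i] ∧ r.findIdx? (a < ·) = some i := by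
  unfold rowIns at h
  split at h
  · simp at h
  · rename_i i hfind
    obtain ⟨hi, -, -⟩ := List.findIdx?_eq_some_iff_getElem.mp hfind
    simp only [Prod.mk.injEq, List.getElem?_eq_getElem hi, Option.some.injEq] at h
    exact ⟨i, hi, h.1.symm, h.2.symm, hfind⟩

lemma length_eq_of_rowIns_eq_some (h : rowIns r a = (r', some b)) : r'.length = r.length := by
  obtain ⟨i, hi, rfl, -⟩ := exists_of_rowIns_eq_some h
  exact List.length_set

lemma mem_of_rowIns_eq_some (h : rowIns r a = (r', some b)) : b ∈ r := by
  obtain ⟨i, hi, -, rfl, -⟩ := exists_of_rowIns_eq_some h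
  exact List.getElem_mem hi

lemma insertTab_cons_of_rowIns_eq_none (h : rowIns r a = (r', none)) (rest : List (List α)) :
    insertTab (r :: rest) a = r' :: rest := by
  simp [insertTab, h]

lemma insertTab_cons_of_rowIns_eq_some (h : rowIns r a = (r', some b)) (rest : List (List α)) :
    insertTab (r :: rest) a = r' :: insertTab rest b := by
  simp [insertTab, h]

lemma length_rowOf_insertTab (tab : List (List α)) (a : α) (y : ℕ) :
    (rowOf (insertTab tab a) y).length = (rowOf tab y).length ∨
      (rowOf (insertTab tab a) y).length = (rowOf tab y).length + 1 := by
  induction tab generalizing a y with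
  | nil => cases y <;> simp [insertTab]
  | cons r rest ih =>
    rcases h : rowIns r a with ⟨r', _ | b⟩
    · rw [insertTab_cons_of_rowIns_eq_none h, eq_append_of_rowIns_eq_none h]
      cases y <;> simp
    · rw [insertTab_cons_of_rowIns_eq_some h]
      cases y
      · simp [length_eq_of_rowIns_eq_some h]
      · exact ih b _

lemma insTab_append (l : List α) (a : α) : insTab (l ++ [a]) = insertTab (insTab l) a := by
  simp [insTab]

lemma rowIns_map {β : Type*} [LinearOrder β] {f : α → β} (hf : StrictMono f) (r : List α)
    (a : α) : rowIns (r.map f) (f a) = ((rowIns r a).1.map f, (rowIns r a).2.map f) := by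
  have hfind : (r.map f).findIdx? (f a < ·) = r.findIdx? (a < ·) := by
    rw [List.findIdx?_map]
    congr 1
    funext b
    simp [hf.lt_iff_lt]
  unfold rowIns
  rw [hfind]
  split <;> simp [List.map_set]

lemma insertTab_map_map {β : Type*} [LinearOrder β] {f : α → β} (hf : StrictMono f)
    (tab : List (List α)) (a : α) :
    insertTab (tab.map (List.map f)) (f a) = (insertTab tab a).map (List.map f) := by
  induction tab generalizing a with
  | nil => rfl
  | cons r rest ih =>
    rcases h : rowIns r a with ⟨r', _ | b⟩
    · rw [insertTab_cons_of_rowIns_eq_none h, List.map_cons,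
        insertTab_cons_of_rowIns_eq_none (by rw [rowIns_map hf, h]; rfl)]
      rfl
    · rw [insertTab_cons_of_rowIns_eq_some h, List.map_cons,
        insertTab_cons_of_rowIns_eq_some (by rw [rowIns_map hf, h]; rfl), ih]
      rfl

lemma insTab_map {β : Type*} [LinearOrder β] {f : α → β} (hf : StrictMono f) (l : List α) :
    insTab (l.map f) = (insTab l).map (List.map f) := by
  induction l using List.reverseRecOn with
  | nil => rfl
  | append_singleton l a ih =>
    rw [List.map_append, List.map_singleton, insTab_append, insTab_append, ih,
      insertTab_map_map hf]

end Insertion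

section Infinity

variable {α : Type*}

/-- For `y` beyond the last row, `[⊤]` is added as a new last row. -/
def appTop [Top α] : List (List α) → ℕ → List (List α)
  | [], _ => [[⊤]]
  | r :: rest, 0 => (r ++ [⊤]) :: rest
  | r :: rest, y + 1 => r :: appTop rest y

@[simp]
lemma appTop_nil [Top α] (y : ℕ) : appTop ([] : List (List α)) y = [[⊤]] := rfl

@[simp]
lemma appTop_cons_zero [Top α] (r : List α) (rest : List (List α)) :
    appTop (r :: rest) 0 = (r ++ [⊤]) :: rest := rfl

@[simp]
lemma appTop_cons_succ [Top α] (r : List α) (rest : List (List α)) (y : ℕ) :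
    appTop (r :: rest) (y + 1) = r :: appTop rest y := rfl

lemma rowOf_appTop_self [Top α] {tab : List (List α)} {y : ℕ} (hy : y ≤ tab.length) :
    rowOf (appTop tab y) y = rowOf tab y ++ [⊤] := by
  induction tab generalizing y with
  | nil =>
    obtain rfl : y = 0 := by simpa using hy
    rfl
  | cons r rest ih =>
    cases y with
    | zero => rfl
    | succ y => exact ih (by simpa using hy)

lemma rowOf_appTop_of_ne [Top α] {tab : List (List α)} {y z : ℕ} (hy : y ≤ tab.length)
    (hz : z ≠ y) : rowOf (appTop tab y) z = rowOf tab z := by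
  induction tab generalizing y z with
  | nil =>
    obtain rfl : y = 0 := by simpa using hy
    obtain ⟨z, rfl⟩ := Nat.exists_eq_succ_of_ne_zero hz
    rfl
  | cons r rest ih =>
    cases y <;> cases z
    · exact absurd rfl hz
    · rfl
    · rfl
    · exact ih (by simpa using hy) (by omega)

variable [LinearOrder α] [OrderTop α] {r r' : List α} {a b : α}

lemma insertTab_top (tab : List (List α)) : insertTab tab ⊤ = appTop tab 0 := by
  cases tab with
  | nil => rfl
  | cons r rest =>
    have h : rowIns r ⊤ = (r ++ [⊤], none) := by
      unfold rowIns
      rw [List.findIdx?_eq_none_iff.mpr fun x _ => by simp]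
    rw [insertTab_cons_of_rowIns_eq_none h, appTop_cons_zero]

lemma rowIns_append_top_of_none (ha : a ≠ ⊤) (h : rowIns r a = (r', none)) :
    rowIns (r ++ [⊤]) a = (r', some ⊤) := by
  have : (r ++ [⊤]).findIdx? (a < ·) = some r.length := by
    rw [List.findIdx?_append, findIdx?_eq_none_of_rowIns_eq_none h]
    simp [lt_top_iff_ne_top.mpr ha]
  simp [rowIns, this, List.set_append_right, eq_append_of_rowIns_eq_none h]

lemma rowIns_append_top_of_some (h : rowIns r a = (r', some b)) :
    rowIns (r ++ [⊤]) a = (r' ++ [⊤], some b) := by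
  obtain ⟨i, hi, rfl, rfl, hfind⟩ := exists_of_rowIns_eq_some h
  have : (r ++ [⊤]).findIdx? (a < ·) = some i := by
    simp [List.findIdx?_append, hfind]
  simp [rowIns, this, List.set_append_left _ _ hi, List.getElem?_append_left hi,
    List.getElem?_eq_getElem hi]

lemma insertTab_appTop (tab : List (List α)) (htab : ∀ r ∈ tab, ⊤ ∉ r) (ha : a ≠ ⊤) (y : ℕ) :
    insertTab (appTop tab y) a = appTop (insertTab tab a)
      (if (rowOf (insertTab tab a) y).length = (rowOf tab y).length + 1 then y + 1 else y) := by
  induction tab generalizing a y with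
  | nil =>
    have h : rowIns [⊤] a = ([a], some ⊤) := rowIns_append_top_of_none (r := []) ha rfl
    rw [appTop_nil, insertTab_cons_of_rowIns_eq_some h]
    cases y <;> rfl
  | cons r rest ih =>
    rcases h : rowIns r a with ⟨r', _ | b⟩
    · rw [insertTab_cons_of_rowIns_eq_none h, eq_append_of_rowIns_eq_none h]
      cases y with
      | zero =>
        rw [appTop_cons_zero, insertTab_cons_of_rowIns_eq_some (rowIns_append_top_of_none ha h),
          eq_append_of_rowIns_eq_none h, insertTab_top]
        simp
      | succ y =>
        rw [appTop_cons_succ, insertTab_cons_of_rowIns_eq_none h, eq_append_of_rowIns_eq_none h]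
        simp
    · have hb : b ≠ ⊤ := fun hb => htab r (by simp) (hb ▸ mem_of_rowIns_eq_some h)
      rw [insertTab_cons_of_rowIns_eq_some h]
      cases y with
      | zero =>
        rw [appTop_cons_zero, insertTab_cons_of_rowIns_eq_some (rowIns_append_top_of_some h)]
        simp [length_eq_of_rowIns_eq_some h]
      | succ y =>
        rw [appTop_cons_succ, insertTab_cons_of_rowIns_eq_some h,
          ih (fun r hr => htab r (List.mem_cons_of_mem _ hr)) hb y]
        by_cases hc : (rowOf (insertTab rest b) y).length = (rowOf rest y).length + 1 <;>
          simp [hc]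

end Infinity

lemma posTop_appTop (tab : List (List ℝ)) {y : ℕ} (hy : y ≤ tab.length) :
    posTop (appTop (tab.map (List.map (↑))) y) = ((rowOf tab y).length, y) := by
  have hy' : y ≤ (tab.map (List.map ((↑) : ℝ → WithTop ℝ))).length := by simpa using hy
  have hrow : ∀ z, z ≠ y → (⊤ : WithTop ℝ) ∉ rowOf (appTop (tab.map (List.map (↑))) y) z :=
    fun z hz => by simp [rowOf_appTop_of_ne hy' hz, rowOf_map_map]
  have hrowY : sInf {z | (⊤ : WithTop ℝ) ∈ rowOf (appTop (tab.map (List.map (↑))) y) z} = y := by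
    refine IsLeast.csInf_eq ⟨by simp [rowOf_appTop_self hy'], fun z hz => ?_⟩
    by_contra! hzy
    exact hrow z hzy.ne hz
  have hcol : sInf {x | ((rowOf tab y).map ((↑) : ℝ → WithTop ℝ) ++ [⊤]).getD x 0 = ⊤} =
      (rowOf tab y).length := by
    refine IsLeast.csInf_eq ⟨by simp [List.getD_eq_getElem?_getD], fun x hx => ?_⟩
    by_contra! hxl
    rw [Set.mem_ofPred_eq, List.getD_eq_getElem?_getD,
      List.getElem?_append_left (by simpa using hxl)] at hx
    simp [hxl] at hx
  unfold posTop
  rw [hrowY, rowOf_appTop_self hy', rowOf_map_map, hcol]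

section RecordingTableau

variable (w : ℕ → ℝ)

lemma insTab_pref_succ (k : ℕ) : insTab (pref w (k + 1)) = insertTab (insTab (pref w k)) (w k) := by
  simp [pref, List.range_succ, insTab_append]

lemma length_rowOf_insTab_pref_mono (y : ℕ) :
    Monotone fun k => (rowOf (insTab (pref w k)) y).length := by
  refine monotone_nat_of_le_succ fun k => ?_
  rcases length_rowOf_insertTab (insTab (pref w k)) (w k) y with h | h <;>
    simp only [insTab_pref_succ, h] <;> omega

lemma recTab_le_iff {x y k : ℕ} :
    recTab w x y ≤ k ↔ x < (rowOf (insTab (pref w k)) y).length := by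
  refine ⟨fun h => ?_, fun h => sInf_le ⟨k, rfl, mem_cellsOf.mpr h⟩⟩
  by_contra! hk
  have : ((k + 1 : ℕ) : ℕ∞) ≤ recTab w x y := by
    refine le_sInf ?_
    rintro _ ⟨j, rfl, hj⟩
    have hkj : k < j := by
      by_contra! hjk
      exact (mem_cellsOf.mp hj).not_ge ((length_rowOf_insTab_pref_mono w y hjk).trans hk)
    exact_mod_cast hkj
  have := this.trans h
  norm_cast at this
  omega

lemma lt_recTab_iff {x y k : ℕ} :
    k < recTab w x y ↔ (rowOf (insTab (pref w k)) y).length ≤ x := by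
  rw [← not_le, recTab_le_iff, not_lt]

lemma csInf_lt_recTab (s y : ℕ) :
    sInf {x : ℕ | (s : ℕ∞) < recTab w x y} = (rowOf (insTab (pref w s)) y).length := by
  simp_rw [lt_recTab_iff]
  exact csInf_Ici

lemma recTab_length_rowOf_eq_succ_iff (t y : ℕ) :
    recTab w (rowOf (insTab (pref w t)) y).length y = ((t + 1 : ℕ) : ℕ∞) ↔
      (rowOf (insTab (pref w (t + 1))) y).length = (rowOf (insTab (pref w t)) y).length + 1 := by
  have hgt : (t : ℕ∞) < recTab w (rowOf (insTab (pref w t)) y).length y :=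
    (lt_recTab_iff w).mpr le_rfl
  have hgrow := length_rowOf_insertTab (insTab (pref w t)) (w t) y
  rw [← insTab_pref_succ] at hgrow
  have hge : ((t + 1 : ℕ) : ℕ∞) ≤ recTab w (rowOf (insTab (pref w t)) y).length y := by
    push_cast
    exact Order.add_one_le_of_lt hgt
  rw [le_antisymm_iff, recTab_le_iff, and_iff_left hge]
  omega

end RecordingTableau

section BumpingRoute

lemma routeAux_snd (T : ℕ → ℕ → ℕ∞) (m y : ℕ) :
    (routeAux T m y).2 = T (routeAux T m y).1 y := by
  cases y <;> rfl

lemma lazyRow_eq_of_forall_le {T : ℕ → ℕ → ℕ∞} {m t y : ℕ} (hlt : (t : ℕ∞) < (routeAux T m y).2)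
    (hle : ∀ z < y, (routeAux T m z).2 ≤ t) : lazyRow T m t = y :=
  IsLeast.csInf_eq ⟨hlt, fun z hz => not_lt.mp fun hzy => (hle z hzy).not_gt hz⟩

variable (w : ℕ → ℝ) (m : ℕ)

lemma routeAux_recTab_zero :
    routeAux (recTab w) m 0 = ((rowOf (insTab (pref w m)) 0).length,
      recTab w (rowOf (insTab (pref w m)) 0).length 0) := by
  rw [routeAux, csInf_lt_recTab]

lemma routeAux_recTab_succ {y s : ℕ} (h : (routeAux (recTab w) m y).2 = s) :
    routeAux (recTab w) m (y + 1) = ((rowOf (insTab (pref w s)) (y + 1)).length,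
      recTab w (rowOf (insTab (pref w s)) (y + 1)).length (y + 1)) := by
  rw [routeAux, h, csInf_lt_recTab]

lemma lt_routeAux_recTab_zero : (m : ℕ∞) < (routeAux (recTab w) m 0).2 := by
  rw [routeAux_recTab_zero]
  exact (lt_recTab_iff w).mpr le_rfl

lemma lt_routeAux_recTab_succ {y s : ℕ} (h : (routeAux (recTab w) m y).2 = s) :
    (s : ℕ∞) < (routeAux (recTab w) m (y + 1)).2 := by
  rw [routeAux_recTab_succ w m h]
  exact (lt_recTab_iff w).mpr le_rfl

/-- The entries along the bumping route strictly increase until they reach `⊤`, so they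
eventually exceed every time `t`. -/
lemma exists_lt_routeAux_recTab (t : ℕ) : ∃ y, (t : ℕ∞) < (routeAux (recTab w) m y).2 := by
  induction t with
  | zero => exact ⟨0, lt_of_le_of_lt (by simp) (lt_routeAux_recTab_zero w m)⟩
  | succ t ih =>
    obtain ⟨y, hy⟩ := ih
    cases he : (routeAux (recTab w) m y).2 using ENat.recTopCoe with
    | top => exact ⟨y, he ▸ ENat.natCast_lt_top _⟩
    | coe s =>
      rw [he, Nat.cast_lt] at hy
      exact ⟨y + 1, lt_of_le_of_lt (by exact_mod_cast hy) (lt_routeAux_recTab_succ w m he)⟩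

lemma lt_routeAux_lazyRow (t : ℕ) :
    (t : ℕ∞) < (routeAux (recTab w) m (lazyRow (recTab w) m t)).2 :=
  Nat.sInf_mem (exists_lt_routeAux_recTab w m t)

lemma routeAux_le_of_lt_lazyRow {t y : ℕ} (hy : y < lazyRow (recTab w) m t) :
    (routeAux (recTab w) m y).2 ≤ t :=
  not_lt.mp (Nat.notMem_of_lt_sInf hy)

lemma lazyRow_recTab_self : lazyRow (recTab w) m m = 0 :=
  lazyRow_eq_of_forall_le (lt_routeAux_recTab_zero w m) (by simp)

/-- Where the lazy route sits at time `t`, its column is the length of that row of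
`P(ξ₁, …, ξ_t)`: the route entered the row at a time `s ≤ t`, in the first column outside
`P(ξ₁, …, ξ_s)`, and this box is not yet filled at time `t`. -/
lemma routeAux_fst_recTab_eq {t y : ℕ} (hm : m ≤ t) (hle : ∀ z < y, (routeAux (recTab w) m z).2 ≤ t)
    (hlt : (t : ℕ∞) < (routeAux (recTab w) m y).2) :
    (routeAux (recTab w) m y).1 = (rowOf (insTab (pref w t)) y).length := by
  obtain ⟨s, hst, hs⟩ :
      ∃ s ≤ t, (routeAux (recTab w) m y).1 = (rowOf (insTab (pref w s)) y).length := by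
    cases y with
    | zero => exact ⟨m, hm, by rw [routeAux_recTab_zero]⟩
    | succ z =>
      obtain ⟨s, hs, hst⟩ := ENat.le_natCast_iff.mp (hle z z.lt_succ_self)
      exact ⟨s, hst, by rw [routeAux_recTab_succ w m hs]⟩
  rw [routeAux_snd, lt_recTab_iff] at hlt
  exact le_antisymm (hs ▸ length_rowOf_insTab_pref_mono w y hst) hlt

lemma lazyBox_recTab {t : ℕ} (hm : m ≤ t) :
    lazyBox (recTab w) m t =
      ((rowOf (insTab (pref w t)) (lazyRow (recTab w) m t)).length, lazyRow (recTab w) m t) :=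
  Prod.ext (routeAux_fst_recTab_eq w m hm (fun _ => routeAux_le_of_lt_lazyRow w m)
    (lt_routeAux_lazyRow w m t)) rfl

lemma lazyRow_recTab_succ {t : ℕ} (hm : m ≤ t) :
    lazyRow (recTab w) m (t + 1) =
      if (rowOf (insTab (pref w (t + 1))) (lazyRow (recTab w) m t)).length =
          (rowOf (insTab (pref w t)) (lazyRow (recTab w) m t)).length + 1
      then lazyRow (recTab w) m t + 1 else lazyRow (recTab w) m t := by
  set y := lazyRow (recTab w) m t
  have hle : ∀ z < y, (routeAux (recTab w) m z).2 ≤ t := fun _ => routeAux_le_of_lt_lazyRow w m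
  have hlt := lt_routeAux_lazyRow w m t
  have hle' : ∀ z < y, (routeAux (recTab w) m z).2 ≤ (t + 1 : ℕ) :=
    fun z hz => (hle z hz).trans (by exact_mod_cast t.le_succ)
  have hgrow : (routeAux (recTab w) m y).2 = (t + 1 : ℕ) ↔
      (rowOf (insTab (pref w (t + 1))) y).length = (rowOf (insTab (pref w t)) y).length + 1 := by
    rw [routeAux_snd, routeAux_fst_recTab_eq w m hm hle hlt, recTab_length_rowOf_eq_succ_iff]
  by_cases h : (routeAux (recTab w) m y).2 = (t + 1 : ℕ)
  · rw [if_pos (hgrow.mp h)]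
    refine lazyRow_eq_of_forall_le (lt_routeAux_recTab_succ w m h) fun z hz => ?_
    rcases Nat.lt_succ_iff_lt_or_eq.mp hz with hz | rfl
    exacts [hle' z hz, h.le]
  · rw [if_neg (mt hgrow.mpr h)]
    refine lazyRow_eq_of_forall_le (lt_of_le_of_ne ?_ (Ne.symm h)) hle'
    push_cast
    exact Order.add_one_le_of_lt hlt

lemma lazyRow_le_length (t : ℕ) : lazyRow (recTab w) m t ≤ (insTab (pref w t)).length := by
  cases h : lazyRow (recTab w) m t with
  | zero => exact Nat.zero_le _
  | succ z =>
    have hz := routeAux_le_of_lt_lazyRow w m (by omega : z < lazyRow (recTab w) m t)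
    rw [routeAux_snd, recTab_le_iff] at hz
    exact lt_length_of_lt_length_rowOf hz

end BumpingRoute

lemma wtSeq_self (w : ℕ → ℝ) (m : ℕ) : wtSeq w m m = (pref w m).map (↑) ++ [⊤] := by
  simp [wtSeq, pref]

lemma wtSeq_succ (w : ℕ → ℝ) {m t : ℕ} (h : m ≤ t) :
    wtSeq w m (t + 1) = wtSeq w m t ++ [(w t : WithTop ℝ)] := by
  simp [wtSeq, Nat.sub_add_comm h, List.range_succ, Nat.add_sub_cancel' h]

lemma insTab_wtSeq (w : ℕ → ℝ) {m t : ℕ} (hm : m ≤ t) :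
    insTab (wtSeq w m t) =
      appTop ((insTab (pref w t)).map (List.map (↑))) (lazyRow (recTab w) m t) := by
  induction t, hm using Nat.le_induction with
  | base =>
    rw [wtSeq_self, insTab_append, insTab_map WithTop.coe_strictMono, insertTab_top,
      lazyRow_recTab_self]
  | succ t hm ih =>
    have htop : ∀ r ∈ (insTab (pref w t)).map (List.map ((↑) : ℝ → WithTop ℝ)), ⊤ ∉ r := by
      simp
    rw [wtSeq_succ w hm, insTab_append, ih, insertTab_appTop _ htop WithTop.coe_ne_top,
      insertTab_map_map WithTop.coe_strictMono, ← insTab_pref_succ, lazyRow_recTab_succ w m hm]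
    simp only [rowOf_map_map, List.length_map]

theorem lazy_parametrization_eq_trajectory_of_infinity_general
    (w : ℕ → ℝ) (m : ℕ) :
    ∀ t : ℕ, m ≤ t →
      lazyBox (recTab w) m t = posTop (insTab (wtSeq w m t)) := by
  intro t ht
  rw [lazyBox_recTab w m ht, insTab_wtSeq w ht, posTop_appTop _ (lazyRow_le_length w m t)]

/-- For any sequence of distinct reals `ξ₁, ξ₂, …`, the lazy
parametrization of the bumping route of the recording tableau `T = Q(ξ₁, ξ₂, …)`
coincides with the trajectory of `∞`:
`Box^{lazy}_{T,m}(t) = Pos_∞(P(ξ₁, …, ξ_m, ∞, ξ_{m+1}, …, ξ_t))` for all `t ≥ m`. -/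
theorem lazy_parametrization_eq_trajectory_of_infinity
    (w : ℕ → ℝ) (hw : Function.Injective w) (m : ℕ) :
    ∀ t : ℕ, m ≤ t →
      lazyBox (recTab w) m t = posTop (insTab (wtSeq w m t)) :=
  lazy_parametrization_eq_trajectory_of_infinity_general w m

end PoissonBump
end
end

section
/- Let p : 𝕐* → 𝕐 be the map sending an augmented Young diagram (λ,□) to its regular part λ. For any Λ^{(m)} ∈ 𝕐* and any path λ^{(m)} ↗ λ^{(m+1)} ↗ ⋯ in the Young graph with λ^{(m)} = p(Λ^{(m)}), there exists a unique path Λ^{(m)} ↗ Λ^{(m+1)} ↗ ⋯ in the augmented Young graph with the given initial element Λ^{(m)} and such that p(Λ^{(t)}) = λ^{(t)} for every t ∈ {m, m+1, …}. -/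
open MeasureTheory ProbabilityTheory Filter Topology

noncomputable section

namespace PoissonBump

/-- An augmented Young diagram: a Young diagram (finite lower set in `ℕ × ℕ`, boxes
written as `(column, row)`) together with one of its outer corners. -/
structure AugYD where
  cells : Finset (ℕ × ℕ)
  corner : ℕ × ℕ
  lower : IsLowerSet (cells : Set (ℕ × ℕ))
  corner_not_mem : corner ∉ cells
  lower_insert : IsLowerSet (insert corner (cells : Set (ℕ × ℕ)))

/-- The edge relation of the Young graph: `s'` is obtained from `s` by adding one box. -/
def YDedge (s s' : Finset (ℕ × ℕ)) : Prop := s ⊆ s' ∧ s'.card = s.card + 1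

open scoped Classical in
/-- The edge relation of the augmented Young graph. -/
def AugEdge (a b : AugYD) : Prop :=
  YDedge a.cells b.cells ∧
    (if b.cells = insert a.corner a.cells then b.corner.2 = a.corner.2 + 1
     else b.corner = a.corner)

/-! An outer corner of a Young diagram sits at the end of its row, so it is determined by the
row index. Hence an edge of the augmented Young graph is determined by its endpoint's regular
part, and such an edge exists for every Young edge: when the new box is the special box, the end
of the row directly above it is an outer corner of the enlarged diagram; otherwise the old special
box remains an outer corner. Paths are then lifted one edge at a time. -/

end PoissonBump

theorem IsLowerSet.insert_of_forall_lt_mem {α : Type*} [PartialOrder α] {s : Set α} {c : α}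
    (hs : IsLowerSet s) (hc : ∀ q < c, q ∈ s) : IsLowerSet (insert c s) := by
  rintro p q hqp (rfl | hp)
  · rcases eq_or_lt_of_le hqp with rfl | hlt
    · exact Set.mem_insert _ _
    · exact Set.mem_insert_of_mem _ (hc q hlt)
  · exact Set.mem_insert_of_mem _ (hs hqp hp)

theorem Finset.eq_insert_of_subset_of_card_eq_succ {α : Type*} [DecidableEq α] {s t : Finset α}
    {c : α} (hst : s ⊆ t) (hcard : t.card = s.card + 1) (hcs : c ∉ s) (hct : c ∈ t) :
    t = insert c s :=
  (Finset.eq_of_subset_of_card_le (Finset.insert_subset hct hst)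
    (by rw [Finset.card_insert_of_notMem hcs, hcard])).symm

def IsLiftFrom {α β : Type*} (p : β → α) (E : β → β → Prop) (lam : ℕ → α) (m : ℕ)
    (L : ℕ → β) : Prop :=
  ∀ t, m ≤ t → E (L t) (L (t + 1)) ∧ p (L t) = lam t

theorem exists_isLiftFrom {α β : Type*} {p : β → α} {E : β → β → Prop} {lam : ℕ → α} {m : ℕ}
    (hstep : ∀ t, m ≤ t → ∀ b, p b = lam t → ∃ b', E b b' ∧ p b' = lam (t + 1))
    {b₀ : β} (hb₀ : p b₀ = lam m) :
    ∃ L, L m = b₀ ∧ IsLiftFrom p E lam m L := by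
  have hnext : ∀ t b, ∃ b', m ≤ t → p b = lam t → E b b' ∧ p b' = lam (t + 1) := by
    intro t b
    by_cases h : m ≤ t ∧ p b = lam t
    · obtain ⟨b', hb'⟩ := hstep t h.1 b h.2
      exact ⟨b', fun _ _ => hb'⟩
    · exact ⟨b, fun ht hb => absurd ⟨ht, hb⟩ h⟩
  choose next hnext using hnext
  let L : ℕ → β := fun t => Nat.rec b₀ (fun t b => if m ≤ t then next t b else b₀) t
  have hL_le : ∀ t ≤ m, L t = b₀ := by
    intro t ht
    induction t with
    | zero => rfl
    | succ t _ => exact if_neg (by omega)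
  have hL_succ : ∀ t, m ≤ t → L (t + 1) = next t (L t) := fun t ht => if_pos ht
  have hL_over : ∀ t, m ≤ t → p (L t) = lam t := by
    intro t ht
    induction t, ht using Nat.le_induction with
    | base => rw [hL_le m le_rfl, hb₀]
    | succ t ht ih => rw [hL_succ t ht]; exact (hnext t (L t) ht ih).2
  refine ⟨L, hL_le m le_rfl, fun t ht => ⟨?_, hL_over t ht⟩⟩
  rw [hL_succ t ht]
  exact (hnext t (L t) ht (hL_over t ht)).1

theorem IsLiftFrom.unique {α β : Type*} {p : β → α} {E : β → β → Prop} {lam : ℕ → α} {m : ℕ}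
    (hstep : ∀ t, m ≤ t → ∀ b, p b = lam t → ∀ b₁ b₂,
      E b b₁ ∧ p b₁ = lam (t + 1) → E b b₂ ∧ p b₂ = lam (t + 1) → b₁ = b₂)
    {L L' : ℕ → β} (hL : IsLiftFrom p E lam m L) (hL' : IsLiftFrom p E lam m L')
    (hm : L' m = L m) : ∀ t, m ≤ t → L' t = L t := by
  intro t ht
  induction t, ht using Nat.le_induction with
  | base => exact hm
  | succ t ht ih =>
    refine hstep t ht (L t) (hL t ht).2 _ _ ?_ ⟨(hL t ht).1, (hL (t + 1) (by omega)).2⟩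
    exact ⟨ih ▸ (hL' t ht).1, (hL' (t + 1) (by omega)).2⟩

namespace PoissonBump

theorem mem_iff_lt_rowLen {s : Finset (ℕ × ℕ)} (hs : IsLowerSet (s : Set (ℕ × ℕ))) (x y : ℕ) :
    (x, y) ∈ s ↔ x < rowLen s y := by
  have hcard (n : ℕ) : ((Finset.range n).image fun u => (u, y)).card = n := by
    rw [Finset.card_image_of_injective _ (Prod.mk_left_injective y), Finset.card_range]
  constructor
  · intro hxy
    have hsub : (Finset.range (x + 1)).image (fun u => (u, y)) ⊆ s.filter fun c => c.2 = y := by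
      intro q hq
      obtain ⟨u, hu, rfl⟩ := Finset.mem_image.mp hq
      exact Finset.mem_filter.mpr
        ⟨hs (Prod.mk_le_mk.mpr ⟨Nat.lt_succ_iff.mp (Finset.mem_range.mp hu), le_rfl⟩) hxy, rfl⟩
    have := Finset.card_le_card hsub
    rwa [hcard] at this
  · intro hlt
    by_contra hxy
    have hsub : (s.filter fun c => c.2 = y) ⊆ (Finset.range x).image (fun u => (u, y)) := by
      rintro ⟨u, v⟩ hq
      obtain ⟨huv, rfl⟩ := Finset.mem_filter.mp hq
      refine Finset.mem_image.mpr ⟨u, Finset.mem_range.mpr ?_, rfl⟩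
      by_contra hux
      exact hxy (hs (Prod.mk_le_mk.mpr ⟨not_lt.mp hux, le_rfl⟩) huv)
    have := Finset.card_le_card hsub
    rw [hcard] at this
    exact absurd hlt (not_lt.mpr this)

namespace AugYD

theorem corner_fst_eq_rowLen (a : AugYD) : a.corner.1 = rowLen a.cells a.corner.2 := by
  have hle : rowLen a.cells a.corner.2 ≤ a.corner.1 :=
    not_lt.mp ((mem_iff_lt_rowLen a.lower _ _).not.mp a.corner_not_mem)
  suffices a.corner.1 ≠ 0 → a.corner.1 - 1 < rowLen a.cells a.corner.2 by omega
  intro h0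
  have hleft : (a.corner.1 - 1, a.corner.2) ∈ insert a.corner (a.cells : Set (ℕ × ℕ)) :=
    a.lower_insert (Prod.mk_le_mk.mpr ⟨Nat.sub_le _ 1, le_rfl⟩) (Set.mem_insert _ _)
  rcases hleft with heq | hmem
  · exact absurd (congrArg Prod.fst heq) (by omega)
  · exact (mem_iff_lt_rowLen a.lower _ _).mp hmem

theorem ext_of_corner_snd {a b : AugYD} (hcells : a.cells = b.cells)
    (hrow : a.corner.2 = b.corner.2) : a = b := by
  have hcol : a.corner.1 = b.corner.1 := by
    rw [a.corner_fst_eq_rowLen, b.corner_fst_eq_rowLen, hcells, hrow]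
  cases a; cases b
  dsimp only at hcells hrow hcol
  subst hcells
  congr
  exact Prod.ext hcol hrow

theorem exists_corner_above (a : AugYD) :
    ∃ b : AugYD, b.cells = insert a.corner a.cells ∧ b.corner.2 = a.corner.2 + 1 := by
  set s := insert a.corner a.cells
  set y := a.corner.2
  set ℓ := rowLen s (y + 1)
  have hs : IsLowerSet (s : Set (ℕ × ℕ)) := by
    rw [Finset.coe_insert]; exact a.lower_insert
  have hℓ : ℓ ≤ a.corner.1 := by
    by_contra! hlt
    have habove := (mem_iff_lt_rowLen hs _ _).mpr hlt
    rcases Finset.mem_insert.mp habove with heq | hmem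
    · exact absurd (congrArg Prod.snd heq) (by simp [y])
    · exact a.corner_not_mem (a.lower (Prod.mk_le_mk.mpr ⟨le_rfl, Nat.le_succ y⟩) hmem)
  have hnot : (ℓ, y + 1) ∉ s := fun h => lt_irrefl ℓ ((mem_iff_lt_rowLen hs _ _).mp h)
  refine ⟨⟨s, (ℓ, y + 1), hs, hnot, hs.insert_of_forall_lt_mem ?_⟩, rfl, rfl⟩
  rintro ⟨u, v⟩ huv
  obtain ⟨hu, hv⟩ := Prod.mk_le_mk.mp huv.le
  rcases Nat.of_le_succ hv with hv | rfl
  · exact hs (Prod.mk_le_mk.mpr ⟨hu.trans hℓ, hv⟩) (Finset.mem_insert_self _ _)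
  · exact (mem_iff_lt_rowLen hs _ _).mpr (lt_of_le_of_ne hu fun h => huv.ne (by rw [h]))

theorem isLowerSet_insert_corner (a : AugYD) {s : Finset (ℕ × ℕ)}
    (hs : IsLowerSet (s : Set (ℕ × ℕ))) (hsub : a.cells ⊆ s) :
    IsLowerSet (insert a.corner (s : Set (ℕ × ℕ))) := by
  refine hs.insert_of_forall_lt_mem fun q hq => ?_
  rcases a.lower_insert hq.le (Set.mem_insert _ _) with heq | hmem
  · exact absurd heq hq.ne
  · exact hsub hmem

theorem existsUnique_augEdge (a : AugYD) {s : Finset (ℕ × ℕ)}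
    (hs : IsLowerSet (s : Set (ℕ × ℕ))) (h : YDedge a.cells s) :
    ∃! b : AugYD, AugEdge a b ∧ b.cells = s := by
  by_cases hmem : a.corner ∈ s
  · have hbump := Finset.eq_insert_of_subset_of_card_eq_succ h.1 h.2 a.corner_not_mem hmem
    subst hbump
    obtain ⟨b, hcells, hrow⟩ := a.exists_corner_above
    refine ⟨b, ⟨⟨hcells ▸ h, by rwa [if_pos hcells]⟩, hcells⟩, ?_⟩
    rintro b' ⟨⟨-, hb'⟩, hcells'⟩
    rw [if_pos hcells'] at hb'
    exact ext_of_corner_snd (hcells'.trans hcells.symm) (hb'.trans hrow.symm)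
  · have hne : s ≠ insert a.corner a.cells := fun e => hmem (e ▸ Finset.mem_insert_self _ _)
    refine ⟨⟨s, a.corner, hs, hmem, a.isLowerSet_insert_corner hs h.1⟩,
      ⟨⟨h, by rw [if_neg hne]⟩, rfl⟩, ?_⟩
    rintro b' ⟨⟨-, hb'⟩, hcells'⟩
    rw [if_neg (hcells' ▸ hne)] at hb'
    exact ext_of_corner_snd hcells' (congrArg Prod.snd hb')

end AugYD

/-- Lifting of paths: for any augmented Young diagram `Λ` and any path
`λ^{(m)} ↗ λ^{(m+1)} ↗ ⋯` in the Young graph with `λ^{(m)} = p(Λ)`, there is a unique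
lifted path in the augmented Young graph starting at `Λ` whose regular parts are the
`λ^{(t)}`. -/
theorem unique_lifting_of_paths
    (m : ℕ) (Λ : AugYD) (lam : ℕ → Finset (ℕ × ℕ))
    (hlower : ∀ t, IsLowerSet ((lam t : Set (ℕ × ℕ))))
    (hpath : ∀ t, m ≤ t → YDedge (lam t) (lam (t + 1)))
    (hinit : lam m = Λ.cells) :
    ∃ L : ℕ → AugYD,
      (L m = Λ ∧ ∀ t, m ≤ t → AugEdge (L t) (L (t + 1)) ∧ (L t).cells = lam t) ∧
      ∀ L' : ℕ → AugYD,
        (L' m = Λ ∧ ∀ t, m ≤ t → AugEdge (L' t) (L' (t + 1)) ∧ (L' t).cells = lam t) →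
        ∀ t, m ≤ t → L' t = L t := by
  have hstep : ∀ t, m ≤ t → ∀ b : AugYD, b.cells = lam t →
      ∃! b' : AugYD, AugEdge b b' ∧ b'.cells = lam (t + 1) :=
    fun t ht b hb => b.existsUnique_augEdge (hlower (t + 1)) (hb ▸ hpath t ht)
  obtain ⟨L, hLm, hL⟩ := exists_isLiftFrom (fun t ht b hb => (hstep t ht b hb).exists) hinit.symm
  refine ⟨L, ⟨hLm, hL⟩, fun L' ⟨hL'm, hL'⟩ => ?_⟩
  exact IsLiftFrom.unique (fun t ht b hb _ _ => (hstep t ht b hb).unique) hL hL'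
    (hL'm.trans hLm.symm)

end PoissonBump
end
end

section
/- Fix an integer k ≥ 0 and a real number 0 ≤ p ≤ 1. For each h > 0, the linear combination of Poisson distributions ν_{k,p,h} := (e^h − 1)^{−k} · Σ_{0 ≤ j ≤ k} (−1)^{k−j} · C(k,j) · e^{jh} · Pois(p·j·h) is a probability measure on ℕ₀, and as h → 0 the measure ν_{k,p,h} converges in total variation distance to the binomial distribution Binom(k,p). Moreover (case p = 1) its atoms are given explicitly by ν_{k,1,h}(m) = h^m · k! · S(m,k) / ((e^h − 1)^k · m!) for m ∈ ℕ₀, where S(m,k) is the Stirling number of the second kind; in particular ν_{k,1,h} is supported on {k, k+1, …}. -/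
open MeasureTheory ProbabilityTheory Filter Topology

noncomputable section

namespace PoissonBump

/-!
With `x = e^{(1-p)h}` and falling factorials `j^{(m)} = j(j-1)⋯(j-m+1)`, expanding
`j^n = ∑ₘ S(n,m) j^{(m)}` and using `∑ⱼ (-1)^{k-j} C(k,j) j^{(m)} x^j = k^{(m)} x^m (x-1)^{k-m}`
(`x^m` times the `m`-th derivative of `(x-1)^k`) gives
`ν_{k,p,h}(n) = (ph)^n / (n! (e^h-1)^k) · ∑ₘ S(n,m) k^{(m)} x^m (x-1)^{k-m}`,
a sum of nonnegative terms when `0 ≤ p ≤ 1`. As `h → 0` the term `m` behaves like `h^{n-m}`,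
so only `m = n` survives, and since `(x-1)/(e^h-1) → 1-p` it tends to the binomial atom.
Total mass `1` comes from `∑ⱼ (-1)^{k-j} C(k,j) e^{jh} = (e^h-1)^k`. As the `ν_{k,p,h}` are
probability vectors and the limit is supported on `{0, …, k}`, convergence of these finitely
many atoms already gives convergence in total variation (Scheffé).
-/

open Finset

theorem stirling2_eq_stirlingSecond : stirling2 = Nat.stirlingSecond := by
  funext n m
  induction n generalizing m with
  | zero => cases m <;> rfl
  | succ n ih => cases m <;> simp [stirling2, Nat.stirlingSecond_succ_succ, ih]

theorem mul_descFactorial_eq_descFactorial_succ_add (j m : ℕ) :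
    j * j.descFactorial m = j.descFactorial (m + 1) + m * j.descFactorial m := by
  rcases le_or_gt m j with h | h
  · rw [Nat.descFactorial_succ, ← add_mul, Nat.sub_add_cancel h]
  · simp [Nat.descFactorial_eq_zero_iff_lt.mpr h]

theorem pow_eq_sum_stirlingSecond_mul_descFactorial (j n : ℕ) :
    j ^ n = ∑ m ∈ range (n + 1), Nat.stirlingSecond n m * j.descFactorial m := by
  induction n with
  | zero => simp
  | succ n ih =>
    have hshift : ∑ m ∈ range (n + 1), m * Nat.stirlingSecond n m * j.descFactorial m
        = ∑ m ∈ range (n + 1),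
            (m + 1) * Nat.stirlingSecond n (m + 1) * j.descFactorial (m + 1) := by
      calc _ = ∑ m ∈ range (n + 2), m * Nat.stirlingSecond n m * j.descFactorial m := by
            rw [sum_range_succ _ (n + 1), Nat.stirlingSecond_eq_zero_of_lt n.lt_succ_self]
            simp
        _ = _ := by
            rw [sum_range_succ']
            simp
    calc j ^ (n + 1)
        = ∑ m ∈ range (n + 1), Nat.stirlingSecond n m * (j * j.descFactorial m) := by
          rw [pow_succ, ih, sum_mul]
          exact sum_congr rfl fun m _ => by ring
      _ = ∑ m ∈ range (n + 1), Nat.stirlingSecond n m * j.descFactorial (m + 1)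
          + ∑ m ∈ range (n + 1), m * Nat.stirlingSecond n m * j.descFactorial m := by
          rw [← sum_add_distrib]
          exact sum_congr rfl fun m _ => by rw [mul_descFactorial_eq_descFactorial_succ_add]; ring
      _ = ∑ m ∈ range (n + 2), Nat.stirlingSecond (n + 1) m * j.descFactorial m := by
          rw [hshift, ← sum_add_distrib, sum_range_succ' _ (n + 1)]
          simp only [Nat.stirlingSecond_succ_succ, Nat.stirlingSecond_succ_zero, zero_mul,
            add_zero]
          exact sum_congr rfl fun m _ => by ring

theorem choose_mul_descFactorial {k j m : ℕ} (hmj : m ≤ j) :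
    k.choose j * j.descFactorial m = k.descFactorial m * (k - m).choose (j - m) := by
  rw [Nat.descFactorial_eq_factorial_mul_choose, Nat.descFactorial_eq_factorial_mul_choose,
    mul_left_comm, Nat.choose_mul hmj, mul_assoc]

section AlternatingSums

variable {R : Type*} [CommRing R]

theorem sum_neg_one_pow_mul_choose_mul_pow (k : ℕ) (x : R) :
    ∑ j ∈ range (k + 1), (-1) ^ (k - j) * (k.choose j : R) * x ^ j = (x - 1) ^ k := by
  rw [sub_eq_add_neg, add_pow]
  exact sum_congr rfl fun j _ => by ring

theorem sum_neg_one_pow_mul_choose_mul_descFactorial_mul_pow (k m : ℕ) (x : R) :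
    ∑ j ∈ range (k + 1), (-1) ^ (k - j) * (k.choose j : R) * (j.descFactorial m : R) * x ^ j
      = (k.descFactorial m : R) * x ^ m * (x - 1) ^ (k - m) := by
  rcases lt_or_ge k m with hkm | hmk
  · have hvanish : ∀ j ∈ range (k + 1), j.descFactorial m = 0 := fun j hj =>
      Nat.descFactorial_eq_zero_iff_lt.mpr ((Nat.lt_succ_iff.mp (mem_range.mp hj)).trans_lt hkm)
    simp +contextual [hvanish]
  obtain ⟨i, rfl⟩ := Nat.exists_eq_add_of_le hmk
  rw [add_assoc, sum_range_add, sum_eq_zero fun j hj =>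
    by simp [Nat.descFactorial_eq_zero_iff_lt.mpr (mem_range.mp hj)], zero_add,
    Nat.add_sub_cancel_left, ← sum_neg_one_pow_mul_choose_mul_pow i x, mul_sum]
  refine sum_congr rfl fun l _ => ?_
  have hcoeff := congrArg (Nat.cast (R := R))
    (choose_mul_descFactorial (k := m + i) (Nat.le_add_right m l))
  push_cast at hcoeff
  simp only [Nat.add_sub_cancel_left, Nat.add_sub_add_left] at hcoeff ⊢
  linear_combination (-1) ^ (i - l) * x ^ (m + l) * hcoeff

theorem sum_neg_one_pow_mul_choose_mul_pow_mul_pow (k n : ℕ) (x : R) :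
    ∑ j ∈ range (k + 1), (-1) ^ (k - j) * (k.choose j : R) * (j : R) ^ n * x ^ j
      = ∑ m ∈ range (k + 1), (Nat.stirlingSecond n m : R) * (k.descFactorial m : R) *
          x ^ m * (x - 1) ^ (k - m) := by
  set g : ℕ → R := fun m =>
    (Nat.stirlingSecond n m : R) * (k.descFactorial m : R) * x ^ m * (x - 1) ^ (k - m)
  have hg : ∀ m, n < m ∨ k < m → g m = 0 := by
    rintro m (h | h) <;> simp [g, Nat.stirlingSecond_eq_zero_of_lt h,
      Nat.descFactorial_eq_zero_iff_lt.mpr h]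
  calc ∑ j ∈ range (k + 1), (-1) ^ (k - j) * (k.choose j : R) * (j : R) ^ n * x ^ j
      = ∑ j ∈ range (k + 1), ∑ m ∈ range (n + 1), (Nat.stirlingSecond n m : R) *
          ((-1) ^ (k - j) * (k.choose j : R) * (j.descFactorial m : R) * x ^ j) := by
        refine sum_congr rfl fun j _ => ?_
        rw [← Nat.cast_pow, pow_eq_sum_stirlingSecond_mul_descFactorial, Nat.cast_sum, mul_sum,
          sum_mul]
        exact sum_congr rfl fun m _ => by push_cast; ring
    _ = ∑ m ∈ range (n + 1), g m := by
        rw [sum_comm]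
        refine sum_congr rfl fun m _ => ?_
        rw [← mul_sum, sum_neg_one_pow_mul_choose_mul_descFactorial_mul_pow]
        ring
    _ = ∑ m ∈ range (n + k + 1), g m :=
        sum_subset (range_subset_range.2 (by omega)) fun m _ hm =>
          hg m (Or.inl (by simp at hm; omega))
    _ = ∑ m ∈ range (k + 1), g m :=
        (sum_subset (range_subset_range.2 (by omega)) fun m _ hm =>
          hg m (Or.inr (by simp at hm; omega))).symm

end AlternatingSums

theorem tsum_abs_sub_of_hasSum_one {β : Type*} {f g : β → ℝ} {s : Finset β} (hf : HasSum f 1)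
    (hf0 : ∀ b, 0 ≤ f b) (hg : ∀ b ∉ s, g b = 0) :
    ∑' b, |f b - g b| = ∑ b ∈ s, |f b - g b| + (1 - ∑ b ∈ s, f b) := by
  have htail : ∀ b : ↥(s : Set β)ᶜ, |f b - g b| = f b := fun b => by
    rw [hg b b.2, sub_zero, abs_of_nonneg (hf0 b)]
  rw [← (hf.summable.sub (summable_of_ne_finset_zero hg)).abs.sum_add_tsum_compl (s := s),
    tsum_congr htail, ← hf.tsum_eq, ← hf.summable.sum_add_tsum_compl (s := s),
    add_sub_cancel_left]

theorem tendsto_tsum_abs_sub_of_tendsto {α β : Type*} {l : Filter α} {f : α → β → ℝ}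
    {g : β → ℝ} {s : Finset β} (hf : ∀ᶠ a in l, HasSum (f a) 1 ∧ ∀ b, 0 ≤ f a b)
    (hg : ∀ b ∉ s, g b = 0) (hg1 : ∑ b ∈ s, g b = 1)
    (hlim : ∀ b ∈ s, Tendsto (fun a => f a b) l (𝓝 (g b))) :
    Tendsto (fun a => ∑' b, |f a b - g b|) l (𝓝 0) := by
  have hfin : Tendsto (fun a => ∑ b ∈ s, |f a b - g b| + (1 - ∑ b ∈ s, f a b)) l
      (𝓝 (∑ b ∈ s, |g b - g b| + (1 - ∑ b ∈ s, g b))) :=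
    (tendsto_finsetSum _ fun b hb => ((hlim b hb).sub tendsto_const_nhds).abs).add
      (tendsto_const_nhds.sub (tendsto_finsetSum _ hlim))
  rw [hg1] at hfin
  simp only [sub_self, abs_zero, sum_const_zero, add_zero] at hfin
  exact hfin.congr' (hf.mono fun a ha => (tsum_abs_sub_of_hasSum_one ha.1 ha.2 hg).symm)

theorem tendsto_exp_mul_sub_one_div (c : ℝ) :
    Tendsto (fun h => (Real.exp (c * h) - 1) / h) (𝓝[≠] 0) (𝓝 c) := by
  have hd : HasDerivAt (fun h => Real.exp (c * h)) c 0 := by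
    simpa using ((hasDerivAt_id (0 : ℝ)).const_mul c).exp
  exact (hasDerivAt_iff_tendsto_slope.mp hd).congr fun h => by simp [slope_def_field]

theorem hasSum_poisPMF (r : ℝ) : HasSum (poisPMF r) 1 := by
  have h := (NormedSpace.expSeries_div_hasSum_exp r).mul_left (Real.exp (-r))
  rw [← Real.exp_eq_exp_ℝ, ← Real.exp_add, neg_add_cancel, Real.exp_zero] at h
  rwa [show poisPMF r = fun n => Real.exp (-r) * (r ^ n / n.factorial) from
    funext fun n => mul_div_assoc _ _ _]

theorem binomPMF_eq_zero_of_lt {k n : ℕ} (p : ℝ) (h : k < n) : binomPMF k p n = 0 := by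
  simp [binomPMF, h.not_ge]

theorem sum_binomPMF (k : ℕ) (p : ℝ) : ∑ n ∈ range (k + 1), binomPMF k p n = 1 := by
  have h := add_pow p (1 - p) k
  rw [add_sub_cancel, one_pow] at h
  rw [h]
  refine sum_congr rfl fun n hn => ?_
  rw [binomPMF, if_pos (Nat.lt_succ_iff.mp (mem_range.mp hn))]
  ring

theorem nuPMF_eq_mul_sum_stirlingSecond (k n : ℕ) (p h : ℝ) :
    nuPMF k p h n = (p * h) ^ n / (n.factorial * (Real.exp h - 1) ^ k) *
      ∑ m ∈ range (k + 1), (Nat.stirlingSecond n m : ℝ) * (k.descFactorial m : ℝ) *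
        Real.exp ((1 - p) * h) ^ m * (Real.exp ((1 - p) * h) - 1) ^ (k - m) := by
  rw [nuPMF, ← sum_neg_one_pow_mul_choose_mul_pow_mul_pow, mul_sum, mul_sum]
  refine sum_congr rfl fun j _ => ?_
  have hexp : Real.exp ((1 - p) * h) ^ j = Real.exp (j * h) * Real.exp (-(p * j * h)) := by
    rw [← Real.exp_nat_mul, ← Real.exp_add]
    ring_nf
  rw [poisPMF, hexp]
  ring

theorem nuPMF_nonneg (k : ℕ) {p h : ℝ} (hp0 : 0 ≤ p) (hp1 : p ≤ 1) (hh : 0 < h) (n : ℕ) :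
    0 ≤ nuPMF k p h n := by
  have hx : 0 ≤ Real.exp ((1 - p) * h) - 1 :=
    sub_nonneg.mpr (Real.one_le_exp (mul_nonneg (by linarith) hh.le))
  have hd : 0 ≤ Real.exp h - 1 := sub_nonneg.mpr (Real.one_le_exp hh.le)
  rw [nuPMF_eq_mul_sum_stirlingSecond]
  exact mul_nonneg (by positivity) (sum_nonneg fun m _ => mul_nonneg (by positivity)
    (pow_nonneg hx _))

theorem hasSum_nuPMF (k : ℕ) (p : ℝ) {h : ℝ} (hh : h ≠ 0) : HasSum (nuPMF k p h) 1 := by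
  have hsum := (hasSum_sum fun j (_ : j ∈ range (k + 1)) =>
    (hasSum_poisPMF (p * j * h)).mul_left
      ((-1 : ℝ) ^ (k - j) * (k.choose j : ℝ) * Real.exp (j * h))).mul_left
    ((Real.exp h - 1) ^ k)⁻¹
  have hval : ∑ j ∈ range (k + 1),
      (-1 : ℝ) ^ (k - j) * (k.choose j : ℝ) * Real.exp (j * h) * 1 = (Real.exp h - 1) ^ k := by
    simp_rw [mul_one, Real.exp_nat_mul, sum_neg_one_pow_mul_choose_mul_pow]
  have hd : Real.exp h - 1 ≠ 0 := sub_ne_zero.mpr ((Real.exp_eq_one_iff h).not.mpr hh)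
  rwa [hval, inv_mul_cancel₀ (pow_ne_zero k hd)] at hsum

theorem nuPMF_one_eq (k m : ℕ) (h : ℝ) :
    nuPMF k 1 h m = h ^ m * k.factorial * Nat.stirlingSecond m k /
      ((Real.exp h - 1) ^ k * m.factorial) := by
  rw [nuPMF_eq_mul_sum_stirlingSecond,
    sum_eq_single_of_mem k (self_mem_range_succ k) fun j hj hjk => by
      simp [show k - j ≠ 0 by simp at hj; omega]]
  simp [Nat.descFactorial_self]
  ring

theorem tendsto_stirlingSecond_term (p : ℝ) {k m : ℕ} (hmk : m ≤ k) (n : ℕ) :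
    Tendsto (fun h => (p * h) ^ n / (n.factorial * (Real.exp h - 1) ^ k) *
        ((Nat.stirlingSecond n m : ℝ) * (k.descFactorial m : ℝ) *
          Real.exp ((1 - p) * h) ^ m * (Real.exp ((1 - p) * h) - 1) ^ (k - m)))
      (𝓝[≠] 0) (𝓝 (if m = n then binomPMF k p n else 0)) := by
  rcases lt_or_ge n m with hnm | hmn
  · simp [Nat.stirlingSecond_eq_zero_of_lt hnm, hnm.ne']
  obtain ⟨a, rfl⟩ := Nat.exists_eq_add_of_le hmn
  obtain ⟨b, rfl⟩ := Nat.exists_eq_add_of_le hmk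
  set C : ℝ := Nat.stirlingSecond (m + a) m * (m + b).descFactorial m * p ^ (m + a) /
    (m + a).factorial
  have hx : Tendsto (fun h => Real.exp ((1 - p) * h)) (𝓝[≠] 0) (𝓝 1) := by
    exact ((by fun_prop : Continuous fun h : ℝ => Real.exp ((1 - p) * h)).tendsto' 0 1
      (by simp)).mono_left nhdsWithin_le_nhds
  have hρ := tendsto_exp_mul_sub_one_div (1 - p)
  have hσ : Tendsto (fun h => (Real.exp h - 1) / h) (𝓝[≠] 0) (𝓝 1) := by
    simpa using tendsto_exp_mul_sub_one_div 1
  have hpow : Tendsto (fun h : ℝ => h ^ a) (𝓝[≠] 0) (𝓝 (0 ^ a)) :=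
    ((continuous_pow a).tendsto 0).mono_left nhdsWithin_le_nhds
  have hlim := ((((tendsto_const_nhds (x := C)).mul (hx.pow m)).mul (hρ.pow b)).mul hpow).div
    (hσ.pow (m + b)) (by simp)
  refine (hlim.congr' ?_).trans (le_of_eq ?_)
  · -- `(p h)^n (x-1)^(k-m) / (e^h-1)^k = p^n ((x-1)/h)^(k-m) h^(n-m) / ((e^h-1)/h)^k`
    filter_upwards [self_mem_nhdsWithin] with h (hh : h ≠ 0)
    have hd : Real.exp h - 1 ≠ 0 := sub_ne_zero.mpr ((Real.exp_eq_one_iff h).not.mpr hh)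
    simp only [C, Pi.div_apply, div_pow, Nat.add_sub_cancel_left]
    field_simp
    ring
  · rcases a.eq_zero_or_pos with rfl | ha
    · simp only [C, binomPMF, add_zero, pow_zero, one_pow, mul_one, div_one, ↓reduceIte,
        Nat.le_add_right, Nat.add_sub_cancel_left, Nat.stirlingSecond_self,
        Nat.descFactorial_eq_factorial_mul_choose, Nat.cast_mul, Nat.cast_one, one_mul]
      field_simp
    · simp [ha.ne']

theorem tendsto_nuPMF (k n : ℕ) (p : ℝ) :
    Tendsto (fun h => nuPMF k p h n) (𝓝[≠] 0) (𝓝 (binomPMF k p n)) := by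
  have hlim : binomPMF k p n = ∑ m ∈ range (k + 1), if m = n then binomPMF k p n else 0 := by
    rw [sum_ite_eq']
    split_ifs with hn
    · rfl
    · exact binomPMF_eq_zero_of_lt p (by simpa using hn)
  simp_rw [nuPMF_eq_mul_sum_stirlingSecond, mul_sum]
  rw [hlim]
  exact tendsto_finsetSum _ fun m hm =>
    tendsto_stirlingSecond_term p (Nat.lt_succ_iff.mp (mem_range.mp hm)) n

/-- For `k ∈ ℕ₀`, `0 ≤ p ≤ 1` and `h > 0`, the linear combination of
Poisson distributions `ν_{k,p,h}` is a probability measure on `ℕ₀`; as `h → 0⁺` it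
converges in total variation distance to the binomial distribution `Binom(k,p)`; for
`p = 1` its atoms are `ν_{k,1,h}(m) = h^m k! S(m,k) / ((e^h-1)^k m!)` with `S(m,k)` the
Stirling numbers of the second kind, so `ν_{k,1,h}` is supported on `{k, k+1, …}`. -/
theorem poisson_combination_approximates_binomial
    (k : ℕ) (p : ℝ) (hp0 : 0 ≤ p) (hp1 : p ≤ 1) :
    (∀ h : ℝ, 0 < h → (∀ n : ℕ, 0 ≤ nuPMF k p h n) ∧ (∑' n : ℕ, nuPMF k p h n) = 1) ∧
    Tendsto (fun h : ℝ => (1 / 2 : ℝ) * ∑' n : ℕ, |nuPMF k p h n - binomPMF k p n|)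
      (𝓝[>] (0 : ℝ)) (𝓝 0) ∧
    (∀ h : ℝ, 0 < h → ∀ m : ℕ,
      nuPMF k 1 h m =
        h ^ m * (k.factorial : ℝ) * (stirling2 m k : ℝ) /
          ((Real.exp h - 1) ^ k * m.factorial)) ∧
    (∀ h : ℝ, 0 < h → ∀ m : ℕ, m < k → nuPMF k 1 h m = 0) := by
  have hTV := tendsto_tsum_abs_sub_of_tendsto (l := 𝓝[>] 0) (s := range (k + 1))
    (eventually_mem_nhdsWithin.mono fun h (hh : 0 < h) =>
      ⟨hasSum_nuPMF k p hh.ne', nuPMF_nonneg k hp0 hp1 hh⟩)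
    (fun n hn => binomPMF_eq_zero_of_lt p (by simpa using hn)) (sum_binomPMF k p)
    (fun n _ => (tendsto_nuPMF k n p).mono_left (nhdsGT_le_nhdsNE 0))
  refine ⟨fun h hh => ⟨nuPMF_nonneg k hp0 hp1 hh, (hasSum_nuPMF k p hh.ne').tsum_eq⟩,
    by simpa using hTV.const_mul (1 / 2 : ℝ), fun h _ m => ?_, fun h _ m hm => ?_⟩
  · rw [nuPMF_one_eq, stirling2_eq_stirlingSecond]
  · rw [nuPMF_one_eq, Nat.stirlingSecond_eq_zero_of_lt hm]
    simp

end PoissonBump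
end
end
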